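/- arXiv:2410.22261 — 3 statements merged into one kernel-verified Lean document; each statement's English description precedes it below -/
import Mathlib

section
/- Let m, a, b be finite types, let P : Matrix m m ℂ be any matrix, let h : Matrix a a ℂ be any matrix, and let g : Matrix a b ℂ satisfy gᴴ * g = 1 (g is an isometry). Then P ⊗ₖ (gᴴ * h * g) + (1 - P) ⊗ₖ (1 : Matrix b b ℂ) = (1 ⊗ₖ g)ᴴ * (P ⊗ₖ h + (1 - P) ⊗ₖ 1) * (1 ⊗ₖ g). In other words, ctrl P (gᴴ * h * g) = (1 ⊗ₖ g)ᴴ * (ctrl P h) * (1 ⊗ₖ g): controlling the with-computed circuit g; h; g† only requires controlling the middle part h, while g and g† are applied uncontrolled. -/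
open Matrix Kronecker

private lemma kron_conjT {m a b : Type*} (A : Matrix m m ℂ) (g : Matrix a b ℂ) :
    (A ⊗ₖ g)ᴴ = Aᴴ ⊗ₖ gᴴ := by
  ext ⟨i, j⟩ ⟨k, l⟩
  simp [Matrix.conjTranspose_apply, Matrix.kroneckerMap_apply, mul_comm]

/-- Controlling a with-computed circuit `g; h; g†` only requires controlling the
middle part `h`: `ctrl P (gᴴ * h * g) = (1 ⊗ₖ g)ᴴ * (ctrl P h) * (1 ⊗ₖ g)`. -/
theorem ctrl_withComputed {m a b : Type*} [Fintype m] [Fintype a] [Fintype b]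
    [DecidableEq m] [DecidableEq a] [DecidableEq b]
    (P : Matrix m m ℂ) (h : Matrix a a ℂ) (g : Matrix a b ℂ)
    (hg : gᴴ * g = 1) :
    P ⊗ₖ (gᴴ * h * g) + (1 - P) ⊗ₖ (1 : Matrix b b ℂ) =
      ((1 : Matrix m m ℂ) ⊗ₖ g)ᴴ * (P ⊗ₖ h + (1 - P) ⊗ₖ (1 : Matrix a a ℂ)) *
        ((1 : Matrix m m ℂ) ⊗ₖ g) := by
  rw [kron_conjT, conjTranspose_one, Matrix.mul_add, Matrix.add_mul,
    ← mul_kronecker_mul, ← mul_kronecker_mul, ← mul_kronecker_mul, ← mul_kronecker_mul]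
  simp [Matrix.mul_assoc, hg]
end

section
/- Let m, n be finite types and let P : Matrix m m ℂ be idempotent (P * P = P). Then for all G₁ G₂ : Matrix n n ℂ, ctrl P (G₁ * G₂) = (ctrl P G₁) * (ctrl P G₂), i.e., (P ⊗ₖ (G₁ * G₂) + (1 - P) ⊗ₖ 1) = (P ⊗ₖ G₁ + (1 - P) ⊗ₖ 1) * (P ⊗ₖ G₂ + (1 - P) ⊗ₖ 1). Thus controlling is compatible with composition of gates. -/
open Matrix Kronecker

/-! `P ⊗ₖ G + (1 - P) ⊗ₖ 1` is block diagonal with respect to the complementary idempotents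
`P` and `1 - P`, and such block-diagonal Kronecker sums multiply blockwise: the cross terms
vanish because `P * (1 - P) = (1 - P) * P = 0`. -/

theorem kronecker_add_kronecker_mul_kronecker_add_kronecker {R m n p q : Type*} [CommSemiring R]
    [Fintype m] [Fintype p] {e f : Matrix m m R} (he : IsIdempotentElem e)
    (hf : IsIdempotentElem f) (hef : e * f = 0) (hfe : f * e = 0)
    (A B : Matrix n p R) (C D : Matrix p q R) :
    (e ⊗ₖ A + f ⊗ₖ B) * (e ⊗ₖ C + f ⊗ₖ D) = e ⊗ₖ (A * C) + f ⊗ₖ (B * D) := by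
  simp only [Matrix.add_mul, Matrix.mul_add, ← mul_kronecker_mul, he.eq, hf.eq, hef, hfe,
    zero_kronecker, add_zero, zero_add]

/-- Controlling by an idempotent `P` is compatible with composition of gates:
`ctrl P (G₁ * G₂) = (ctrl P G₁) * (ctrl P G₂)`. -/
theorem ctrl_mul {m n : Type*} [Fintype m] [Fintype n] [DecidableEq m] [DecidableEq n]
    (P : Matrix m m ℂ) (hP : P * P = P) (G₁ G₂ : Matrix n n ℂ) :
    P ⊗ₖ (G₁ * G₂) + (1 - P) ⊗ₖ (1 : Matrix n n ℂ) =
      (P ⊗ₖ G₁ + (1 - P) ⊗ₖ (1 : Matrix n n ℂ)) *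
        (P ⊗ₖ G₂ + (1 - P) ⊗ₖ (1 : Matrix n n ℂ)) := by
  have hPidem : IsIdempotentElem P := hP
  rw [kronecker_add_kronecker_mul_kronecker_add_kronecker hPidem hPidem.one_sub
    hPidem.mul_one_sub_self hPidem.one_sub_mul_self, one_mul]
end

section
/- Let C be a type carrying two category structures 𝒩 and ℛ (categories with the same objects), let G : 𝒩 ⥤ ℛ be a functor that is the identity on objects, let dag be an operation assigning to each ℛ-morphism g : B ⟶ A a morphism dag g : A ⟶ B, and let act be an operation assigning to each ℛ-morphism g : B ⟶ A and each 𝒩-morphism h : A ⟶ A an 𝒩-morphism act g h : B ⟶ B, such that G.map (act g h) = g ≫ G.map h ≫ dag g for all g and h. If moreover act g (𝟙 A) = 𝟙 B for all g : B ⟶ A in ℛ, then every ℛ-morphism g : B ⟶ A satisfies g ≫ dag g = 𝟙 B. (Hence requiring the with-computed operation to satisfy g ⋅ id = id would force g ; g† = id for all reversible morphisms g.) -/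
universe u v w

theorem act_id_forces_dag_section_general {C : Type u}
    (cN : CategoryTheory.Category.{v} C) (cR : CategoryTheory.Category.{w} C)
    (G : ∀ {A B : C}, (cN.toCategoryStruct.Hom A B) → (cR.toCategoryStruct.Hom A B))
    (hG_id : ∀ A : C, G (cN.toCategoryStruct.id A) = cR.toCategoryStruct.id A)
    (dag : ∀ {A B : C}, (cR.toCategoryStruct.Hom B A) → (cR.toCategoryStruct.Hom A B))
    (act : ∀ {A B : C}, (cR.toCategoryStruct.Hom B A) →
      (cN.toCategoryStruct.Hom A A) → (cN.toCategoryStruct.Hom B B))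
    (hlaw : ∀ {A B : C} (g : cR.toCategoryStruct.Hom B A)
      (h : cN.toCategoryStruct.Hom A A),
      G (act g h) = cR.toCategoryStruct.comp g
        (cR.toCategoryStruct.comp (G h) (dag g)))
    (hact_id : ∀ {A B : C} (g : cR.toCategoryStruct.Hom B A),
      act g (cN.toCategoryStruct.id A) = cN.toCategoryStruct.id B) :
    ∀ {A B : C} (g : cR.toCategoryStruct.Hom B A),
      cR.toCategoryStruct.comp g (dag g) = cR.toCategoryStruct.id B := by
  intro A B g
  calc cR.toCategoryStruct.comp g (dag g)
      = G (act g (cN.toCategoryStruct.id A)) := by rw [hlaw, hG_id, cR.id_comp]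
    _ = cR.toCategoryStruct.id B := by rw [hact_id, hG_id]

/-- Let `𝒩` (`cN`) and `ℛ` (`cR`) be two category structures on the same type of
objects, let `G` be an identity-on-objects functor from `𝒩` to `ℛ` (given by its
action on morphisms, preserving identities and composition), let `dag` be a
dagger operation on `ℛ`, and let `act` be a with-computed operation satisfying
`G (act g h) = g ≫ G h ≫ dag g`. If moreover `act g (𝟙 A) = 𝟙 B` for all
`g : B ⟶ A`, then `g ≫ dag g = 𝟙 B` for every `ℛ`-morphism `g`. -/
theorem act_id_forces_dag_section {C : Type u}
    (cN : CategoryTheory.Category.{v} C) (cR : CategoryTheory.Category.{w} C)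
    (G : ∀ {A B : C}, (cN.toCategoryStruct.Hom A B) → (cR.toCategoryStruct.Hom A B))
    (hG_id : ∀ A : C, G (cN.toCategoryStruct.id A) = cR.toCategoryStruct.id A)
    (hG_comp : ∀ {A B D : C} (f : cN.toCategoryStruct.Hom A B)
      (g : cN.toCategoryStruct.Hom B D),
      G (cN.toCategoryStruct.comp f g) = cR.toCategoryStruct.comp (G f) (G g))
    (dag : ∀ {A B : C}, (cR.toCategoryStruct.Hom B A) → (cR.toCategoryStruct.Hom A B))
    (act : ∀ {A B : C}, (cR.toCategoryStruct.Hom B A) →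
      (cN.toCategoryStruct.Hom A A) → (cN.toCategoryStruct.Hom B B))
    (hlaw : ∀ {A B : C} (g : cR.toCategoryStruct.Hom B A)
      (h : cN.toCategoryStruct.Hom A A),
      G (act g h) = cR.toCategoryStruct.comp g
        (cR.toCategoryStruct.comp (G h) (dag g)))
    (hact_id : ∀ {A B : C} (g : cR.toCategoryStruct.Hom B A),
      act g (cN.toCategoryStruct.id A) = cN.toCategoryStruct.id B) :
    ∀ {A B : C} (g : cR.toCategoryStruct.Hom B A),
      cR.toCategoryStruct.comp g (dag g) = cR.toCategoryStruct.id B :=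
  act_id_forces_dag_section_general cN cR G hG_id dag act hlaw hact_id
end
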